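/- arXiv:1506.07975 — 5 statements merged into one kernel-verified Lean document; each statement's English description precedes it below -/
import Mathlib

section
/- Let φ and ψ be pure states on a finite-dimensional Hilbert space ℂ^d with incoherent basis, and suppose |ψ⟩ is proportional to K|φ⟩ ≠ 0 for some incoherent Kraus operator K (i.e., φ is transformed to ψ by a probabilistic incoherent operation). Then rank Δ(ψ) ≤ rank Δ(φ); that is, the rank of the dephased (diagonal) part of a pure state cannot increase under probabilistic incoherent operations. -/
namespace Coherence

open Matrix
open scoped BigOperators ComplexOrder

variable {ι κ : Type*} [Fintype ι] [DecidableEq ι] [Fintype κ] [DecidableEq κ]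

/-- A density matrix: positive semidefinite with unit trace. -/
def IsDensity (ρ : Matrix ι ι ℂ) : Prop := ρ.PosSemidef ∧ ρ.trace = 1

/-- The dephasing (decohering) map Δ in the fixed (incoherent) basis. -/
def dephase (ρ : Matrix ι ι ℂ) : Matrix ι ι ℂ := Matrix.diagonal (fun i => ρ i i)

/-- The pure state |v⟩⟨v| associated with a vector `v`. -/
def pureState (v : ι → ℂ) : Matrix ι ι ℂ := Matrix.of fun i j => v i * star (v j)

/-- `v` is a unit vector. -/
def IsUnitVec (v : ι → ℂ) : Prop := ∑ i, ‖v i‖ ^ 2 = 1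

/-- An incoherent Kraus operator: each column has at most one nonzero entry,
i.e. `K = ∑ i c(i) |j(i)⟩⟨i|` for a function `j` on basis indices. -/
def IncoherentKraus (K : Matrix κ ι ℂ) : Prop :=
  ∀ i : ι, ∃ j : κ, ∀ j' : κ, K j' i ≠ 0 → j' = j

/-- A strictly incoherent Kraus operator: `K` and `K†` are both incoherent. -/
def StrictlyIncoherentKraus (K : Matrix κ ι ℂ) : Prop :=
  IncoherentKraus K ∧ IncoherentKraus Kᴴ

/-- An incoherent operation: a cptp map admitting a Kraus representation by
incoherent Kraus operators. -/
def IsIncoherentOp (T : Matrix ι ι ℂ → Matrix κ κ ℂ) : Prop :=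
  ∃ (m : ℕ) (K : Fin m → Matrix κ ι ℂ),
    (∀ ℓ, IncoherentKraus (K ℓ)) ∧
    (∑ ℓ, (K ℓ)ᴴ * K ℓ = 1) ∧
    (∀ ρ, T ρ = ∑ ℓ, K ℓ * ρ * (K ℓ)ᴴ)

/-- A strictly incoherent operation. -/
def IsStrictlyIncoherentOp (T : Matrix ι ι ℂ → Matrix κ κ ℂ) : Prop :=
  ∃ (m : ℕ) (K : Fin m → Matrix κ ι ℂ),
    (∀ ℓ, StrictlyIncoherentKraus (K ℓ)) ∧
    (∑ ℓ, (K ℓ)ᴴ * K ℓ = 1) ∧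
    (∀ ρ, T ρ = ∑ ℓ, K ℓ * ρ * (K ℓ)ᴴ)

/-- Functional calculus for Hermitian matrices (junk value `0` otherwise). -/
noncomputable def matFun (f : ℝ → ℝ) (A : Matrix ι ι ℂ) : Matrix ι ι ℂ :=
  if h : A.IsHermitian then
    (h.eigenvectorUnitary : Matrix ι ι ℂ) *
      Matrix.diagonal (fun i => (f (h.eigenvalues i) : ℂ)) *
      (star (h.eigenvectorUnitary : Matrix ι ι ℂ))
  else 0

/-- Von Neumann entropy `S(ρ) = −tr ρ log₂ ρ` (with the convention 0 log 0 = 0). -/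
noncomputable def vN (ρ : Matrix ι ι ℂ) : ℝ :=
  if h : ρ.IsHermitian then -∑ i, h.eigenvalues i * Real.logb 2 (h.eigenvalues i) else 0

noncomputable def matLog2 (A : Matrix ι ι ℂ) : Matrix ι ι ℂ := matFun (Real.logb 2) A

noncomputable def matSqrt (A : Matrix ι ι ℂ) : Matrix ι ι ℂ := matFun Real.sqrt A

/-- Quantum relative entropy `S(ρ‖σ) = tr ρ (log₂ ρ − log₂ σ)`. -/
noncomputable def relEnt (ρ σ : Matrix ι ι ℂ) : ℝ :=
  ((ρ * (matLog2 ρ - matLog2 σ)).trace).re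

/-- Fidelity `F(ρ,σ) = tr √(√ρ σ √ρ)`. -/
noncomputable def fidelity (ρ σ : Matrix ι ι ℂ) : ℝ :=
  ((matSqrt (matSqrt ρ * σ * matSqrt ρ)).trace).re

/-- Trace norm `‖A‖₁ = tr √(A†A)`. -/
noncomputable def traceNorm (A : Matrix ι ι ℂ) : ℝ :=
  ((matSqrt (Aᴴ * A)).trace).re

/-- Bures distance `B(ρ,σ) = √2 √(1 − F(ρ,σ))`. -/
noncomputable def bures (ρ σ : Matrix ι ι ℂ) : ℝ :=
  Real.sqrt 2 * Real.sqrt (1 - fidelity ρ σ)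

/-- Binary entropy function. -/
noncomputable def binEnt (x : ℝ) : ℝ :=
  -(x * Real.logb 2 x) - (1 - x) * Real.logb 2 (1 - x)

/-- The `n`-fold tensor (Kronecker) power of a matrix, with indices the product basis. -/
def tpow (ρ : Matrix ι ι ℂ) (n : ℕ) : Matrix (Fin n → ι) (Fin n → ι) ℂ :=
  Matrix.of fun i j => ∏ t, ρ (i t) (j t)

/-- The unit (qubit maximally coherent) state Φ₂. -/
noncomputable def Phi2 : Matrix (Fin 2) (Fin 2) ℂ := Matrix.of fun _ _ => (1 / 2 : ℂ)

/-- Relative entropy of coherence `C_r(ρ) = S(Δ(ρ)) − S(ρ)`. -/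
noncomputable def Cr (ρ : Matrix ι ι ℂ) : ℝ := vN (dephase ρ) - vN ρ

/-- Coherence of formation: the least average entropy of coherence over finite
pure-state decompositions of `ρ`. -/
noncomputable def Cf (ρ : Matrix ι ι ℂ) : ℝ :=
  sInf {x | ∃ (m : ℕ) (p : Fin m → ℝ) (v : Fin m → ι → ℂ),
    (∀ k, 0 ≤ p k) ∧ (∀ k, IsUnitVec (v k)) ∧
    ρ = ∑ k, (p k : ℂ) • pureState (v k) ∧
    x = ∑ k, p k * vN (dephase (pureState (v k)))}

/-- `R` is an achievable coherence-distillation rate for `ρ`. -/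
def DistillRate {d : ℕ} (ρ : Matrix (Fin d) (Fin d) ℂ) (R : ℝ) : Prop :=
  0 ≤ R ∧ ∀ ε > 0, ∃ N : ℕ, ∀ n ≥ N,
    ∃ T : Matrix (Fin n → Fin d) (Fin n → Fin d) ℂ →
          Matrix (Fin ⌊(n : ℝ) * R⌋₊ → Fin 2) (Fin ⌊(n : ℝ) * R⌋₊ → Fin 2) ℂ,
      IsIncoherentOp T ∧ 1 - ε ≤ fidelity (T (tpow ρ n)) (tpow Phi2 ⌊(n : ℝ) * R⌋₊)

/-- Distillable coherence. -/
noncomputable def Cd {d : ℕ} (ρ : Matrix (Fin d) (Fin d) ℂ) : ℝ :=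
  sSup {R | DistillRate ρ R}

/-- `R` is an achievable coherence-formation rate for `ρ`. -/
def FormRate {d : ℕ} (ρ : Matrix (Fin d) (Fin d) ℂ) (R : ℝ) : Prop :=
  0 ≤ R ∧ ∀ ε > 0, ∃ N : ℕ, ∀ n ≥ N,
    ∃ T : Matrix (Fin ⌈(n : ℝ) * R⌉₊ → Fin 2) (Fin ⌈(n : ℝ) * R⌉₊ → Fin 2) ℂ →
          Matrix (Fin n → Fin d) (Fin n → Fin d) ℂ,
      IsIncoherentOp T ∧ 1 - ε ≤ fidelity (T (tpow Phi2 ⌈(n : ℝ) * R⌉₊)) (tpow ρ n)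

/-- Coherence cost. -/
noncomputable def Cc {d : ℕ} (ρ : Matrix (Fin d) (Fin d) ℂ) : ℝ :=
  sInf {R | FormRate ρ R}

/-- Sum of the `t` largest entries of the vector `p` (as a sup over size-`t` subsets). -/
noncomputable def sumTop (p : ι → ℝ) (t : ℕ) : ℝ :=
  sSup {x | ∃ A : Finset ι, A.card = t ∧ x = ∑ i ∈ A, p i}

/-- The spectrum of a Hermitian matrix (junk value `0` otherwise). -/
noncomputable def matSpectrum (A : Matrix ι ι ℂ) : ι → ℝ :=
  if h : A.IsHermitian then h.eigenvalues else 0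

/-- `A ≻ B`: the spectrum of `A` majorizes the spectrum of `B`. -/
def MajorizesMat (A B : Matrix ι ι ℂ) : Prop :=
  (∀ t : ℕ, sumTop (matSpectrum B) t ≤ sumTop (matSpectrum A) t) ∧
  ∑ i, matSpectrum A i = ∑ i, matSpectrum B i

/-- If a pure state `ψ` (unit vector `w`) is proportional to `K|φ⟩ ≠ 0`
for an incoherent Kraus operator `K`, then `rank Δ(ψ) ≤ rank Δ(φ)`. -/
theorem rank_dephase_nonincreasing {d : ℕ} (v w : Fin d → ℂ)
    (hv : IsUnitVec v) (hw : IsUnitVec w)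
    (K : Matrix (Fin d) (Fin d) ℂ) (hK : IncoherentKraus K)
    (hKv : K.mulVec v ≠ 0) (c : ℂ) (hprop : w = c • K.mulVec v) :
    (dephase (pureState w)).rank ≤ (dephase (pureState v)).rank := by
  classical
  have hr : ∀ u : Fin d → ℂ,
      (dephase (pureState u)).rank = Fintype.card {i // u i ≠ 0} := by
    intro u
    have h1 : dephase (pureState u) = Matrix.diagonal (fun i => u i * star (u i)) := rfl
    rw [h1, Matrix.rank_diagonal]
    exact Fintype.card_congr (Equiv.subtypeEquivRight (fun i => by
      simp [mul_eq_zero]))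
  rw [hr v, hr w]
  choose j hj using hK
  have hex : ∀ k : Fin d, w k ≠ 0 → ∃ i, K k i * v i ≠ 0 := by
    intro k hk
    have h0 : K.mulVec v k ≠ 0 := by
      intro h0
      apply hk
      rw [hprop]
      simp [h0]
    have h1 : ∑ i, K k i * v i ≠ 0 := by
      simpa [Matrix.mulVec, dotProduct] using h0
    exact (Finset.exists_ne_zero_of_sum_ne_zero h1).imp (fun i h => h.2)
  choose g hg using hex
  apply Fintype.card_le_of_injective
    (fun k => ⟨g k.1 k.2, fun h0 => hg k.1 k.2 (by rw [h0, mul_zero])⟩)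
  intro k k' hkk'
  have hval : g k.1 k.2 = g k'.1 k'.2 := congrArg Subtype.val hkk'
  have h1 : (k : Fin d) = j (g k.1 k.2) :=
    hj _ _ (fun h0 => hg k.1 k.2 (by rw [h0, zero_mul]))
  have h2 : (k' : Fin d) = j (g k'.1 k'.2) :=
    hj _ _ (fun h0 => hg k'.1 k'.2 (by rw [h0, zero_mul]))
  exact Subtype.ext (h1.trans (by rw [hval, ← h2]))

end Coherence
end

section
/- Let ψ and φ be pure states on ℂ^d. If Δ(ψ) majorizes Δ(φ), i.e., Δ(ψ) ≻ Δ(φ), then there exists a strictly incoherent operation T with T(|φ⟩⟨φ|) = |ψ⟩⟨ψ|. -/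
namespace Coherence

open Matrix
open scoped BigOperators ComplexOrder

variable {ι κ : Type*} [Fintype ι] [DecidableEq ι] [Fintype κ] [DecidableEq κ]

/-! The diagonal of `Δ(|ψ⟩⟨ψ|)` is `q = (‖w i‖²)ᵢ`, so the hypothesis says that `q` majorizes
`p = (‖v i‖²)ᵢ`. By Rado's theorem `p = ∑ₜ λₜ (q ∘ σₜ)` is a convex combination of permutations
of `q`: otherwise a functional `c` separates `p` from all `q ∘ σ`, which contradicts Abel summation
of `⟨c, p⟩` against the decreasing rearrangements of `c` and `q`. Writing
`cₜ(i) vᵢ = √λₜ w_{σₜ(i)}` with `∑ₜ |cₜ(i)|² = 1`, the Kraus operators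
`Kₜ = ∑ᵢ cₜ(i) |σₜ(i)⟩⟨i|` are strictly incoherent, complete, and send `v` to `√λₜ w`, so the
operation maps `|φ⟩⟨φ|` to `∑ₜ λₜ |ψ⟩⟨ψ| = |ψ⟩⟨ψ|`. -/

open Finset

theorem exists_perm_comp_eq_of_map_univ_eq {n α : Type*} [Fintype n] [DecidableEq α]
    {f g : n → α} (h : univ.val.map f = univ.val.map g) : ∃ σ : Equiv.Perm n, f ∘ σ = g := by
  have hfiber (a : α) : Fintype.card {i // g i = a} = Fintype.card {i // f i = a} := by
    have := congrArg (Multiset.count a) h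
    simp only [Multiset.count_map, eq_comm (a := a)] at this
    simp only [Fintype.card_subtype]
    exact this.symm
  exact ⟨Equiv.ofFiberEquiv fun a => Fintype.equivOfCardEq (hfiber a),
    funext (Equiv.ofFiberEquiv_map _)⟩

theorem exists_perm_matSpectrum_diagonal {n : Type*} [Fintype n] [DecidableEq n] (r : n → ℝ) :
    ∃ σ : Equiv.Perm n, matSpectrum (diagonal fun i => (r i : ℂ)) = r ∘ σ := by
  have hA : (diagonal fun i => (r i : ℂ)).IsHermitian :=
    isHermitian_diagonal_of_self_adjoint _ (funext fun i => Complex.conj_ofReal (r i))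
  have hroots := hA.roots_charpoly_eq_eigenvalues
  simp only [charpoly_diagonal, Polynomial.roots_prod _ _ (prod_ne_zero_iff.2 fun i _ =>
      Polynomial.X_sub_C_ne_zero _), Polynomial.roots_X_sub_C, Multiset.bind_singleton,
    Complex.coe_algebraMap, Function.comp_apply] at hroots
  obtain ⟨σ, hσ⟩ := exists_perm_comp_eq_of_map_univ_eq (f := r) (g := hA.eigenvalues)
    (Multiset.map_injective Complex.ofReal_injective
      (by simpa only [Multiset.map_map, Function.comp_def] using hroots))
  exact ⟨σ, by rw [matSpectrum, dif_pos hA, hσ]⟩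

theorem dephase_pureState {n : Type*} [Fintype n] [DecidableEq n] (v : n → ℂ) :
    dephase (pureState v) = diagonal fun i => ((‖v i‖ ^ 2 : ℝ) : ℂ) := by
  ext i j
  simp [dephase, pureState, Complex.mul_conj, Complex.normSq_eq_norm_sq]

theorem val_le_val_apply_of_strictMono {t d : ℕ} {g : Fin t → Fin d} (hg : StrictMono g)
    (k : Fin t) : (k : ℕ) ≤ g k := by
  simpa using card_le_card_of_injOn g (s := Iio k) (t := Iio (g k))
    (fun j hj => by simpa using hg (by simpa using hj)) hg.injective.injOn

section sumTop

variable {n : Type*}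

theorem sumTop_comp_equiv {m : Type*} (p : n → ℝ) (e : m ≃ n) (t : ℕ) :
    sumTop (p ∘ e) t = sumTop p t := by
  unfold sumTop
  congr 1
  ext x
  constructor
  · rintro ⟨A, rfl, rfl⟩
    exact ⟨A.map e.toEmbedding, card_map _, by simp⟩
  · rintro ⟨B, rfl, rfl⟩
    exact ⟨B.map e.symm.toEmbedding, card_map _, by simp⟩

variable [Fintype n]

theorem sum_le_sumTop (p : n → ℝ) (A : Finset n) : ∑ i ∈ A, p i ≤ sumTop p #A := by
  refine le_csSup ((Set.finite_range fun B : Finset n => ∑ i ∈ B, p i).subset ?_).bddAbove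
    ⟨A, rfl, rfl⟩
  rintro x ⟨B, -, rfl⟩
  exact ⟨B, rfl⟩

theorem sumTop_eq_sum_castLE_of_antitone {d t : ℕ} {p : Fin d → ℝ} (hp : Antitone p)
    (ht : t ≤ d) : sumTop p t = ∑ k : Fin t, p (Fin.castLE ht k) := by
  refine le_antisymm (csSup_le ⟨_, univ.map (Fin.castLEEmb ht), by simp, rfl⟩ ?_) ?_
  · rintro x ⟨A, hA, rfl⟩
    rw [← A.map_orderEmbOfFin_univ hA, sum_map]
    exact sum_le_sum fun k _ =>
      hp (val_le_val_apply_of_strictMono (A.orderEmbOfFin hA).strictMono k)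
  · simpa using sum_le_sumTop p (univ.map (Fin.castLEEmb ht))

end sumTop

def Majorizes {n : Type*} [Fintype n] (q p : n → ℝ) : Prop :=
  (∀ t : ℕ, sumTop p t ≤ sumTop q t) ∧ ∑ i, q i = ∑ i, p i

theorem majorizes_comp_equiv_iff {m n : Type*} [Fintype m] [Fintype n] (q p : n → ℝ)
    (σ τ : m ≃ n) :
    Majorizes (q ∘ σ) (p ∘ τ) ↔ Majorizes q p := by
  simp only [Majorizes, sumTop_comp_equiv, Function.comp_apply, Equiv.sum_comp]

theorem majorizesMat_diagonal_iff {n : Type*} [Fintype n] [DecidableEq n] (r s : n → ℝ) :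
    MajorizesMat (diagonal fun i => (r i : ℂ)) (diagonal fun i => (s i : ℂ)) ↔ Majorizes r s := by
  obtain ⟨σ, hσ⟩ := exists_perm_matSpectrum_diagonal r
  obtain ⟨τ, hτ⟩ := exists_perm_matSpectrum_diagonal s
  rw [← majorizes_comp_equiv_iff r s σ τ, ← hσ, ← hτ]
  rfl

theorem sum_range_mul_le_of_partial_sums_le {d : ℕ} {c p q : ℕ → ℝ}
    (hc : ∀ i, i + 1 < d → c (i + 1) ≤ c i)
    (hpq : ∀ t < d, ∑ k ∈ range t, p k ≤ ∑ k ∈ range t, q k)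
    (hsum : ∑ k ∈ range d, p k = ∑ k ∈ range d, q k) :
    ∑ k ∈ range d, c k * p k ≤ ∑ k ∈ range d, c k * q k := by
  have hp := sum_range_by_parts c p d
  have hq := sum_range_by_parts c q d
  simp only [smul_eq_mul] at hp hq
  rw [hp, hq, hsum]
  refine sub_le_sub_left (sum_le_sum fun i hi => ?_) _
  have hi : i + 1 < d := by rw [mem_range] at hi; omega
  exact mul_le_mul_of_nonpos_left (hpq _ hi) (by linarith [hc i hi])

theorem sum_mul_le_of_antitone_of_partial_sums_le {d : ℕ} {c p q : Fin d → ℝ}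
    (hc : Antitone c)
    (hpq : ∀ t (ht : t ≤ d), ∑ k : Fin t, p (Fin.castLE ht k) ≤ ∑ k : Fin t, q (Fin.castLE ht k))
    (hsum : ∑ k, p k = ∑ k, q k) :
    ∑ k, c k * p k ≤ ∑ k, c k * q k := by
  let seq (f : Fin d → ℝ) : ℕ → ℝ := Function.extend Fin.val f 0
  have seq_apply (f : Fin d → ℝ) (k : Fin d) : seq f k = f k :=
    Fin.val_injective.extend_apply f 0 k
  have sum_fin (f : Fin d → ℝ) : ∑ k, f k = ∑ k ∈ range d, seq f k := by
    simp only [← Fin.sum_univ_eq_sum_range, seq_apply]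
  have sum_prefix (f : Fin d → ℝ) (t) (ht : t ≤ d) :
      ∑ k : Fin t, f (Fin.castLE ht k) = ∑ k ∈ range t, seq f k := by
    rw [← Fin.sum_univ_eq_sum_range]
    exact sum_congr rfl fun k _ => (seq_apply f (Fin.castLE ht k)).symm
  have hmul (f : Fin d → ℝ) : ∑ k, c k * f k = ∑ k ∈ range d, seq c k * seq f k := by
    simp only [← Fin.sum_univ_eq_sum_range, seq_apply]
  rw [hmul, hmul]
  refine sum_range_mul_le_of_partial_sums_le (fun i hi => ?_) (fun t ht => ?_) ?_
  · exact (seq_apply c ⟨i + 1, hi⟩).trans_le <| (hc (Fin.mk_le_mk.2 i.le_succ)).trans_eq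
      (seq_apply c ⟨i, by omega⟩).symm
  · rw [← sum_prefix, ← sum_prefix]; exact hpq t ht.le
  · rw [← sum_fin, ← sum_fin, hsum]

noncomputable def antitoneSort {d : ℕ} (p : Fin d → ℝ) : Equiv.Perm (Fin d) :=
  Fin.revPerm.trans (Tuple.sort p)

theorem antitone_comp_antitoneSort {d : ℕ} (p : Fin d → ℝ) : Antitone (p ∘ antitoneSort p) :=
  fun _ _ hab => Tuple.monotone_sort p (Fin.rev_le_rev.mpr hab)

theorem Majorizes.exists_perm_sum_mul_le {d : ℕ} {q p : Fin d → ℝ} (h : Majorizes q p)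
    (c : Fin d → ℝ) : ∃ σ : Equiv.Perm (Fin d), ∑ i, c i * p i ≤ ∑ i, c i * q (σ i) := by
  set τ := antitoneSort c
  set s := antitoneSort q
  have hprefix (t) (ht : t ≤ d) :
      ∑ k : Fin t, p (τ (Fin.castLE ht k)) ≤ ∑ k : Fin t, q (s (Fin.castLE ht k)) :=
    calc ∑ k : Fin t, p (τ (Fin.castLE ht k)) ≤ sumTop (p ∘ τ) t := by
          simpa using sum_le_sumTop (p ∘ τ) (univ.map (Fin.castLEEmb ht))
      _ ≤ sumTop (q ∘ s) t := by
          simpa only [sumTop_comp_equiv] using h.1 t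
      _ = ∑ k : Fin t, q (s (Fin.castLE ht k)) :=
          sumTop_eq_sum_castLE_of_antitone (antitone_comp_antitoneSort q) ht
  have htotal : ∑ k, p (τ k) = ∑ k, q (s k) := by
    rw [Equiv.sum_comp, Equiv.sum_comp, h.2]
  refine ⟨τ.symm.trans s, ?_⟩
  calc ∑ i, c i * p i = ∑ k, c (τ k) * p (τ k) := (Equiv.sum_comp τ fun i => c i * p i).symm
    _ ≤ ∑ k, c (τ k) * q (s k) :=
        sum_mul_le_of_antitone_of_partial_sums_le (antitone_comp_antitoneSort c) hprefix htotal
    _ = ∑ i, c i * q ((τ.symm.trans s) i) := by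
        simpa using Equiv.sum_comp τ fun i => c i * q ((τ.symm.trans s) i)

theorem Majorizes.mem_convexHull_perm {d : ℕ} {q p : Fin d → ℝ} (h : Majorizes q p) :
    p ∈ convexHull ℝ (Set.range fun σ : Equiv.Perm (Fin d) => q ∘ σ) := by
  by_contra hp
  obtain ⟨f, u, hfS, hfp⟩ := geometric_hahn_banach_closed_point (convex_convexHull ℝ _)
    ((Set.finite_range _).isClosed_convexHull (𝕜 := ℝ)) hp
  have hf (x : Fin d → ℝ) : f x = ∑ i, f (Pi.single i 1) * x i := by
    conv_lhs => rw [pi_eq_sum_univ' x, map_sum]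
    simp [mul_comm]
  obtain ⟨σ, hσ⟩ := h.exists_perm_sum_mul_le fun i => f (Pi.single i 1)
  have hfσ := hfS _ (subset_convexHull ℝ _ ⟨σ, rfl⟩)
  rw [hf] at hfσ hfp
  exact (hσ.trans hfσ.le).not_gt hfp

theorem exists_sum_norm_sq_eq_one_mul_eq {τ : Type*} [Fintype τ] [Nonempty τ] (a : ℂ)
    (b : τ → ℂ) (h : ‖a‖ ^ 2 = ∑ t, ‖b t‖ ^ 2) :
    ∃ c : τ → ℂ, ∑ t, ‖c t‖ ^ 2 = 1 ∧ ∀ t, c t * a = b t := by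
  classical
  by_cases ha : a = 0
  · have hb : ∀ t, b t = 0 := by
      simpa [ha, eq_comm (a := (0 : ℝ)), sum_eq_zero_iff_of_nonneg] using h
    obtain ⟨t₀⟩ := ‹Nonempty τ›
    refine ⟨Pi.single t₀ 1, ?_, by simp [ha, hb]⟩
    rw [sum_eq_single t₀ (fun t _ ht => by simp [ht]) (by simp)]
    simp
  · refine ⟨fun t => b t / a, ?_, fun t => div_mul_cancel₀ _ ha⟩
    simp only [norm_div, div_pow, ← sum_div, ← h]
    exact div_self (by positivity)

section permKraus

variable {n : Type*} [DecidableEq n]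

def permKraus (σ : Equiv.Perm n) (c : n → ℂ) : Matrix n n ℂ :=
  of fun j i => if j = σ i then c i else 0

theorem strictlyIncoherentKraus_permKraus (σ : Equiv.Perm n) (c : n → ℂ) :
    StrictlyIncoherentKraus (permKraus σ c) := by
  refine ⟨fun i => ⟨σ i, fun j hj => ?_⟩, fun j => ⟨σ.symm j, fun i hi => ?_⟩⟩
  · by_contra hne
    simp [permKraus, hne] at hj
  · by_contra hne
    simp only [permKraus, conjTranspose_apply, of_apply] at hi
    split_ifs at hi with hji
    · exact hne (σ.eq_symm_apply.mpr hji.symm)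
    · exact hi (star_zero _)

variable [Fintype n]

theorem conjTranspose_permKraus_mul_self (σ : Equiv.Perm n) (c : n → ℂ) :
    (permKraus σ c)ᴴ * permKraus σ c = diagonal fun i => ((‖c i‖ ^ 2 : ℝ) : ℂ) := by
  ext i i'
  rw [mul_apply, sum_eq_single (σ i) (fun j _ hj => by simp [permKraus, hj]) (by simp)]
  by_cases h : i = i'
  · subst h
    simp [permKraus, Complex.conj_mul']
  · simp [permKraus, σ.injective.ne h, h]

theorem permKraus_mulVec (σ : Equiv.Perm n) (c v : n → ℂ) (j : n) :
    (permKraus σ c *ᵥ v) j = c (σ.symm j) * v (σ.symm j) := by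
  rw [mulVec, dotProduct, sum_eq_single (σ.symm j) (fun i _ hi => by
    simp [permKraus, σ.eq_symm_apply.not.mp hi |> Ne.symm]) (by simp)]
  simp [permKraus]

end permKraus

theorem mul_pureState_mul_conjTranspose {m n : Type*} [Fintype n] (K : Matrix m n ℂ)
    (x : n → ℂ) : K * pureState x * Kᴴ = pureState (K *ᵥ x) := by
  ext j j'
  simp only [mul_apply, pureState, of_apply, conjTranspose_apply, mulVec, dotProduct, star_sum,
    star_mul', sum_mul, mul_sum]
  exact sum_congr rfl fun _ _ => sum_congr rfl fun _ _ => by ring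

theorem pureState_smul {n : Type*} (a : ℂ) (x : n → ℂ) :
    pureState (a • x) = ((‖a‖ ^ 2 : ℝ) : ℂ) • pureState x := by
  ext i j
  simp only [pureState, Matrix.smul_apply, of_apply, Pi.smul_apply, smul_eq_mul, star_mul',
    RCLike.star_def, Complex.ofReal_pow, ← Complex.mul_conj']
  ring

theorem isStrictlyIncoherentOp_of_fintype {τ m n : Type*} [Fintype τ] [Fintype m]
    [DecidableEq m] [Fintype n] [DecidableEq n] (K : τ → Matrix m n ℂ)
    (hK : ∀ t, StrictlyIncoherentKraus (K t))
    (hsum : ∑ t, (K t)ᴴ * K t = 1) :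
    IsStrictlyIncoherentOp fun ρ : Matrix n n ℂ => ∑ t, K t * ρ * (K t)ᴴ := by
  let e := Fintype.equivFin τ
  refine ⟨Fintype.card τ, K ∘ e.symm, fun ℓ => hK _, ?_, fun ρ => ?_⟩
  · rwa [← e.symm.sum_comp] at hsum
  · exact (e.symm.sum_comp fun t => K t * ρ * (K t)ᴴ).symm

theorem exists_strictlyIncoherentOp_pureState {τ n : Type*} [Fintype τ] [Fintype n]
    [DecidableEq n] {lam : τ → ℝ} {σ : τ → Equiv.Perm n} (hlam₀ : ∀ t, 0 ≤ lam t)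
    (hlam₁ : ∑ t, lam t = 1) {v w : n → ℂ}
    (hvw : ∀ i, ‖v i‖ ^ 2 = ∑ t, lam t * ‖w (σ t i)‖ ^ 2) :
    ∃ T : Matrix n n ℂ → Matrix n n ℂ,
      IsStrictlyIncoherentOp T ∧ T (pureState v) = pureState w := by
  have : Nonempty τ := by
    by_contra h
    simp [not_nonempty_iff.mp h] at hlam₁
  choose c hc₁ hc using fun i => exists_sum_norm_sq_eq_one_mul_eq (v i)
    (fun t => (Real.sqrt (lam t) : ℂ) * w (σ t i)) (by
      simp [hvw i, mul_pow, sq_abs, Real.sq_sqrt (hlam₀ _)])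
  let K (t : τ) := permKraus (σ t) fun i => c i t
  have hKv (t : τ) : K t *ᵥ v = (Real.sqrt (lam t) : ℂ) • w := by
    ext j
    simp [K, permKraus_mulVec, hc]
  refine ⟨_, isStrictlyIncoherentOp_of_fintype K (fun t => strictlyIncoherentKraus_permKraus _ _)
    ?_, ?_⟩
  · ext i j
    simp only [K, conjTranspose_permKraus_mul_self, Matrix.sum_apply, diagonal_apply, one_apply]
    split_ifs
    · exact_mod_cast hc₁ i
    · exact sum_const_zero
  · simp only [mul_pureState_mul_conjTranspose, hKv, pureState_smul, ← sum_smul]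
    simp [sq_abs, Real.sq_sqrt (hlam₀ _), ← Complex.ofReal_sum, hlam₁]

theorem majorization_implies_strictIC_general {d : ℕ} (v w : Fin d → ℂ)
    (hmaj : MajorizesMat (dephase (pureState w)) (dephase (pureState v))) :
    ∃ T : Matrix (Fin d) (Fin d) ℂ → Matrix (Fin d) (Fin d) ℂ,
      IsStrictlyIncoherentOp T ∧ T (pureState v) = pureState w := by
  rw [dephase_pureState, dephase_pureState, majorizesMat_diagonal_iff] at hmaj
  obtain ⟨τ, _, lam, z, hlam₀, hlam₁, hz, hp⟩ :=
    mem_convexHull_iff_exists_fintype.mp hmaj.mem_convexHull_perm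
  choose σ hσ using hz
  refine exists_strictlyIncoherentOp_pureState hlam₀ hlam₁ (σ := σ) fun i => ?_
  rw [← congrFun hp i, Finset.sum_apply]
  exact sum_congr rfl fun t _ => by simp [← hσ t]

/-- If `Δ(ψ) ≻ Δ(φ)` then there is a strictly incoherent operation
transforming `φ` into `ψ`. -/
theorem majorization_implies_strictIC {d : ℕ} (v w : Fin d → ℂ)
    (hv : IsUnitVec v) (hw : IsUnitVec w)
    (hmaj : MajorizesMat (dephase (pureState w)) (dephase (pureState v))) :
    ∃ T : Matrix (Fin d) (Fin d) ℂ → Matrix (Fin d) (Fin d) ℂ,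
      IsStrictlyIncoherentOp T ∧ T (pureState v) = pureState w :=
  majorization_implies_strictIC_general v w hmaj

end Coherence
end

section
/- Let Φ_d = (1/d) Σ_{i,j=0}^{d−1} |i⟩⟨j| be the maximally coherent state on ℂ^d. For every density matrix ρ on ℂ^d there exists an incoherent operation T with T(Φ_d) = ρ. -/
namespace Coherence

open Matrix
open scoped BigOperators ComplexOrder

variable {ι κ : Type*} [Fintype ι] [DecidableEq ι] [Fintype κ] [DecidableEq κ]

theorem isIncoherentOp_sum_kraus {m n β : Type*} [Fintype m] [DecidableEq m] [Fintype n]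
    [Fintype β] (K : β → Matrix n m ℂ)
    (hK : ∀ b, IncoherentKraus (K b)) (hsum : ∑ b, (K b)ᴴ * K b = 1) :
    IsIncoherentOp fun X : Matrix m m ℂ => ∑ b, K b * X * (K b)ᴴ := by
  let e := Fintype.equivFin β
  refine ⟨Fintype.card β, fun ℓ => K (e.symm ℓ), fun ℓ => hK _, ?_, fun X => ?_⟩
  · rw [Equiv.sum_comp e.symm fun b => (K b)ᴴ * K b, hsum]
  · exact (Equiv.sum_comp e.symm fun b => K b * X * (K b)ᴴ).symm

section Shift

variable {G : Type*} [DecidableEq G] [AddGroup G]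

def shiftKraus (c : G → ℂ) (n : G) : Matrix G G ℂ :=
  of fun a i => if a = i + n then c a else 0

theorem incoherentKraus_shiftKraus (c : G → ℂ) (n : G) : IncoherentKraus (shiftKraus c n) :=
  fun i => ⟨i + n, fun a ha => by_contra fun hne => ha (by simp [shiftKraus, hne])⟩

variable [Fintype G]

theorem shiftKraus_conjTranspose_mul_self (c : G → ℂ) (n : G) :
    (shiftKraus c n)ᴴ * shiftKraus c n = diagonal fun i => star (c (i + n)) * c (i + n) := by
  ext i j
  by_cases hij : i = j
  · subst hij
    simp [shiftKraus, mul_apply]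
  · simp [shiftKraus, mul_apply, hij, Ne.symm hij]

theorem sum_shiftKraus_conjTranspose_mul_self (c : G → ℂ) :
    ∑ n, (shiftKraus c n)ᴴ * shiftKraus c n = (c ⬝ᵥ star c) • (1 : Matrix G G ℂ) := by
  ext i j
  simp_rw [shiftKraus_conjTranspose_mul_self, smul_one_eq_diagonal, Matrix.sum_apply,
    diagonal_apply]
  split_ifs with hij
  · simp only [dotProduct, Pi.star_apply, mul_comm (c _)]
    exact Equiv.sum_comp (Equiv.addLeft i) fun a => star (c a) * c a
  · simp

theorem shiftKraus_mul_const_mul_conjTranspose (c : G → ℂ) (n : G) (x : ℂ) :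
    shiftKraus c n * of (fun _ _ => x) * (shiftKraus c n)ᴴ = x • vecMulVec c (star c) := by
  ext a b
  simp only [shiftKraus, ← sub_eq_iff_eq_add, mul_apply, of_apply, ite_mul, zero_mul,
    Finset.sum_ite_eq, Finset.mem_univ, ↓reduceIte, conjTranspose_apply, apply_ite,
    RCLike.star_def, star_zero, mul_zero, Matrix.smul_apply, vecMulVec_apply, Pi.star_apply,
    smul_eq_mul]
  ring

/-- Write `ρ = ∑ₖ |vₖ⟩⟨vₖ|`. The incoherent Kraus operator `diag(vₖ) Pₙ`, with `Pₙ` the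
translation by `n`, maps the maximally coherent state to `|vₖ⟩⟨vₖ| / |G|`, so summing over all
`k` and `n` gives `ρ`; completeness holds because averaging a diagonal over all translations
gives its trace, and `∑ₖ ⟨vₖ|vₖ⟩ = tr ρ = 1`. -/
theorem exists_isIncoherentOp_apply_maxCoherent_eq {ρ : Matrix G G ℂ} (hρ : IsDensity ρ) :
    ∃ T : Matrix G G ℂ → Matrix G G ℂ,
      IsIncoherentOp T ∧ T (of fun _ _ => 1 / (Fintype.card G : ℂ)) = ρ := by
  obtain ⟨m, v, hv⟩ := posSemidef_iff_eq_sum_vecMulVec.mp hρ.1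
  have htrace : ∑ k, v k ⬝ᵥ star (v k) = 1 := by
    simpa [hv, trace_sum, trace_vecMulVec] using hρ.2
  refine ⟨_, isIncoherentOp_sum_kraus (fun p : Fin m × G => shiftKraus (v p.1) p.2)
    (fun p => incoherentKraus_shiftKraus _ _) ?_, ?_⟩
  · simp_rw [Fintype.sum_prod_type, sum_shiftKraus_conjTranspose_mul_self, ← Finset.sum_smul,
      htrace, one_smul]
  · have hcard : (Fintype.card G : ℂ) ≠ 0 := Nat.cast_ne_zero.mpr Fintype.card_ne_zero
    simp_rw [Fintype.sum_prod_type, shiftKraus_mul_const_mul_conjTranspose, Finset.sum_const,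
      Finset.card_univ, ← Nat.cast_smul_eq_nsmul ℂ, smul_smul, mul_one_div_cancel hcard, one_smul,
      hv]

end Shift

/-- From the maximally coherent state `Φ_d = (1/d) ∑_{i,j} |i⟩⟨j|`, any
density matrix `ρ` on `ℂ^d` can be obtained by an incoherent operation. -/
theorem maxCoherent_generates_all {d : ℕ} (ρ : Matrix (Fin d) (Fin d) ℂ)
    (hρ : IsDensity ρ) :
    ∃ T : Matrix (Fin d) (Fin d) ℂ → Matrix (Fin d) (Fin d) ℂ,
      IsIncoherentOp T ∧ T (Matrix.of fun _ _ => (1 / (d : ℂ))) = ρ := by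
  obtain _ | d := d
  · simpa [trace] using hρ.2
  simpa using exists_isIncoherentOp_apply_maxCoherent_eq hρ

end Coherence
end

section
/- The coherence of formation is additive under tensor products: for density matrices ρ on ℂ^d and σ on ℂ^{d'} (with the tensor-product incoherent basis on ℂ^d ⊗ ℂ^{d'}), C_f(ρ ⊗ σ) = C_f(ρ) + C_f(σ). -/
/-!
Write pure-state decompositions with unnormalised vectors, `ρ = ∑ₖ |φₖ⟩⟨φₖ|`. Products of
decompositions of `ρ` and `σ` decompose `ρ ⊗ σ`, and the entropy of a product distribution is
the sum of the entropies, so `Cf (ρ ⊗ σ) ≤ Cf ρ + Cf σ`. Conversely, since `tr σ = tr ρ = 1`,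
the slices `ψₖ(·, j)` of a decomposition of `ρ ⊗ σ` decompose `ρ` and the slices `ψₖ(i, ·)`
decompose `σ`; their dephased entropies add up to the conditional entropies `H(A|B)` and `H(B|A)`
of the distributions `|ψₖ|²`, and `H(A|B) + H(B|A) ≤ H(AB)`.
-/

namespace Coherence

open Matrix
open scoped BigOperators ComplexOrder

variable {ι κ : Type*} [Fintype ι] [DecidableEq ι] [Fintype κ] [DecidableEq κ]

section ScaledEntropy

variable {α β : Type*} [Fintype α] [Fintype β]

/-- `(∑ f) • H(f / ∑ f)`: the Shannon entropy of the normalised weights, scaled by their mass. -/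
noncomputable def scaledEntropy (f : α → ℝ) : ℝ :=
  ∑ a, -(f a * Real.logb 2 (f a / ∑ b, f b))

lemma scaledEntropy_nonneg {f : α → ℝ} (hf : ∀ a, 0 ≤ f a) : 0 ≤ scaledEntropy f := by
  refine Finset.sum_nonneg fun a _ => neg_nonneg.mpr (mul_nonpos_of_nonneg_of_nonpos (hf a) ?_)
  refine Real.logb_nonpos one_lt_two (div_nonneg (hf a) (Finset.sum_nonneg fun b _ => hf b)) ?_
  exact div_le_one_of_le₀ (Finset.single_le_sum (fun b _ => hf b) (Finset.mem_univ a))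
    (Finset.sum_nonneg fun b _ => hf b)

lemma scaledEntropy_const_mul {c : ℝ} (hc : 0 ≤ c) (f : α → ℝ) :
    scaledEntropy (fun a => c * f a) = c * scaledEntropy f := by
  rcases hc.eq_or_lt with rfl | hc
  · simp [scaledEntropy]
  · have hsum : ∑ b, c * f b = c * ∑ b, f b := (Finset.mul_sum ..).symm
    simp only [scaledEntropy]
    rw [Finset.mul_sum]
    exact Finset.sum_congr rfl fun a _ => by rw [hsum, mul_div_mul_left _ _ hc.ne']; ring

lemma scaledEntropy_of_sum_eq_one {f : α → ℝ} (hf : ∑ a, f a = 1) :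
    scaledEntropy f = ∑ a, -(f a * Real.logb 2 (f a)) := by
  simp [scaledEntropy, hf]

lemma scaledEntropy_mul {f : α → ℝ} {g : β → ℝ} (hf : ∀ a, 0 ≤ f a) (hg : ∀ b, 0 ≤ g b) :
    scaledEntropy (fun p : α × β => f p.1 * g p.2) =
      (∑ b, g b) * scaledEntropy f + (∑ a, f a) * scaledEntropy g := by
  have hsum : ∑ p : α × β, f p.1 * g p.2 = (∑ a, f a) * ∑ b, g b := by
    rw [Fintype.sum_prod_type, Finset.sum_mul_sum]
  have hterm : ∀ a b, -(f a * g b * Real.logb 2 (f a * g b / ((∑ a, f a) * ∑ b, g b))) =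
      g b * -(f a * Real.logb 2 (f a / ∑ a, f a)) +
        f a * -(g b * Real.logb 2 (g b / ∑ b, g b)) := by
    intro a b
    rcases (hf a).eq_or_lt with ha | ha
    · simp [← ha]
    rcases (hg b).eq_or_lt with hb | hb
    · simp [← hb]
    have hF := ha.trans_le (Finset.single_le_sum (fun a _ => hf a) (Finset.mem_univ a))
    have hG := hb.trans_le (Finset.single_le_sum (fun b _ => hg b) (Finset.mem_univ b))
    rw [mul_div_mul_comm, Real.logb_mul (div_pos ha hF).ne' (div_pos hb hG).ne']
    ring
  simp only [scaledEntropy, hsum, Fintype.sum_prod_type, hterm, Finset.sum_add_distrib,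
    ← Finset.sum_mul, ← Finset.mul_sum]

lemma mul_logb_div_le_sub {s t : ℝ} (hs : 0 ≤ s) (ht : 0 ≤ t) (hst : 0 < t → 0 < s) :
    t * Real.logb 2 (s / t) ≤ (s - t) / Real.log 2 := by
  have hlog2 : 0 < Real.log 2 := Real.log_pos one_lt_two
  rcases ht.eq_or_lt with rfl | ht
  · simpa using div_nonneg hs hlog2.le
  have hlog := Real.log_le_sub_one_of_pos (div_pos (hst ht) ht)
  calc t * Real.logb 2 (s / t) ≤ t * ((s / t - 1) / Real.log 2) := by
        rw [Real.logb]; gcongr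
    _ = (s - t) / Real.log 2 := by field_simp

/-- `log x ≤ x - 1` at `x = q r / (N t)`. -/
lemma neg_mul_logb_div_add_neg_mul_logb_div_le {t q r N : ℝ} (ht : 0 ≤ t) (htq : t ≤ q)
    (htr : t ≤ r) (htN : t ≤ N) :
    -(t * Real.logb 2 (t / q)) + -(t * Real.logb 2 (t / r)) ≤
      -(t * Real.logb 2 (t / N)) + (q * r / N - t) / Real.log 2 := by
  have hqr : 0 ≤ q * r / N :=
    div_nonneg (mul_nonneg (ht.trans htq) (ht.trans htr)) (ht.trans htN)
  rcases ht.eq_or_lt with rfl | ht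
  · simpa using div_nonneg hqr (Real.log_pos one_lt_two).le
  have hq := ht.trans_le htq
  have hr := ht.trans_le htr
  have hN := ht.trans_le htN
  have key := mul_logb_div_le_sub hqr ht.le fun _ => by positivity
  rw [Real.logb_div ht.ne' hq.ne', Real.logb_div ht.ne' hr.ne', Real.logb_div ht.ne' hN.ne']
  rw [Real.logb_div (by positivity) ht.ne', Real.logb_div (by positivity) hN.ne',
    Real.logb_mul hq.ne' hr.ne'] at key
  linarith

/-- `H(A|B) + H(B|A) ≤ H(AB)` for the unnormalised joint weights `t`. -/
lemma sum_scaledEntropy_slices_le {t : α × β → ℝ} (ht : ∀ p, 0 ≤ t p) :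
    ∑ b, scaledEntropy (fun a => t (a, b)) + ∑ a, scaledEntropy (fun b => t (a, b)) ≤
      scaledEntropy t := by
  set q : β → ℝ := fun b => ∑ a, t (a, b)
  set r : α → ℝ := fun a => ∑ b, t (a, b)
  set N := ∑ p, t p
  have hterm (p : α × β) := neg_mul_logb_div_add_neg_mul_logb_div_le (ht p)
    (Finset.single_le_sum (fun a _ => ht (a, p.2)) (Finset.mem_univ p.1) : t p ≤ q p.2)
    (Finset.single_le_sum (fun b _ => ht (p.1, b)) (Finset.mem_univ p.2) : t p ≤ r p.1)
    (Finset.single_le_sum (fun p _ => ht p) (Finset.mem_univ p) : t p ≤ N)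
  have herr : ∑ p : α × β, (q p.2 * r p.1 / N - t p) = 0 := by
    rw [Finset.sum_sub_distrib, ← Finset.sum_div, Fintype.sum_prod_type]
    simp only [← Finset.mul_sum, ← Finset.sum_mul]
    rw [show ∑ b, q b = N by simp only [q, N]; rw [Finset.sum_comm, Fintype.sum_prod_type],
      show ∑ a, r a = N from (Fintype.sum_prod_type t).symm, mul_self_div_self, sub_self]
  calc _ = ∑ p : α × β, (-(t p * Real.logb 2 (t p / q p.2)) +
        -(t p * Real.logb 2 (t p / r p.1))) := by
        simp only [scaledEntropy, Finset.sum_add_distrib, Fintype.sum_prod_type]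
        rw [Finset.sum_comm]
    _ ≤ ∑ p : α × β, (-(t p * Real.logb 2 (t p / N)) + (q p.2 * r p.1 / N - t p) / Real.log 2) :=
        Finset.sum_le_sum fun p _ => hterm p
    _ = scaledEntropy t := by
        rw [Finset.sum_add_distrib, ← Finset.sum_div, herr, zero_div, add_zero]; rfl

end ScaledEntropy

section PureStates

variable {α β γ δ : Type*}

/-- `‖φ‖² • S(Δ(|φ⟩⟨φ| / ‖φ‖²))` for an unnormalised vector `φ`. -/
noncomputable def coherenceEntropy [Fintype α] (φ : α → ℂ) : ℝ := scaledEntropy fun i => ‖φ i‖ ^ 2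

lemma vN_diagonal [Fintype α] [DecidableEq α] (f : α → ℝ) :
    vN (diagonal fun i => (f i : ℂ)) = ∑ i, -(f i * Real.logb 2 (f i)) := by
  have hD : (diagonal fun i => (f i : ℂ)).IsHermitian :=
    isHermitian_diagonal_iff.mpr fun i => Complex.conj_ofReal _
  have hspec : Finset.univ.val.map hD.eigenvalues = Finset.univ.val.map f := by
    apply Multiset.map_injective Complex.ofReal_injective
    have hroots := hD.roots_charpoly_eq_eigenvalues
    rw [charpoly_diagonal, Polynomial.roots_prod _ _ (Finset.prod_ne_zero_iff.mpr
      fun i _ => Polynomial.X_sub_C_ne_zero _)] at hroots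
    simpa [Multiset.map_map] using hroots.symm
  rw [vN, dif_pos hD, ← Finset.sum_neg_distrib]
  have hsum := congrArg (fun s => (s.map fun x => -(x * Real.logb 2 x)).sum) hspec
  simp only [Multiset.map_map] at hsum
  exact hsum

lemma pureState_diag_apply (v : α → ℂ) (i : α) : pureState v i i = ((‖v i‖ ^ 2 : ℝ) : ℂ) := by
  rw [pureState, of_apply, Complex.ofReal_pow]
  exact RCLike.mul_conj (v i)

lemma vN_dephase_pureState [Fintype α] [DecidableEq α] {v : α → ℂ} (hv : IsUnitVec v) :
    vN (dephase (pureState v)) = coherenceEntropy v := by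
  simp only [dephase, pureState_diag_apply, vN_diagonal, coherenceEntropy,
    scaledEntropy_of_sum_eq_one hv]

lemma trace_pureState [Fintype α] (v : α → ℂ) :
    (pureState v).trace = ((∑ i, ‖v i‖ ^ 2 : ℝ) : ℂ) := by
  simp only [trace, diag, pureState_diag_apply, Complex.ofReal_sum]

lemma pureState_sqrt_smul {p : ℝ} (hp : 0 ≤ p) (v : α → ℂ) :
    pureState (((√p : ℝ) : ℂ) • v) = (p : ℂ) • pureState v := by
  ext i j
  simp only [pureState, of_apply, Matrix.smul_apply, Pi.smul_apply, smul_eq_mul, star_mul',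
    Complex.star_def, Complex.conj_ofReal]
  rw [show (p : ℂ) = (√p : ℂ) * (√p : ℂ) by rw [← Complex.ofReal_mul, Real.mul_self_sqrt hp]]
  ring

lemma coherenceEntropy_sqrt_smul [Fintype α] {p : ℝ} (hp : 0 ≤ p) (v : α → ℂ) :
    coherenceEntropy (((√p : ℝ) : ℂ) • v) = p * coherenceEntropy v := by
  simp only [coherenceEntropy, Pi.smul_apply, smul_eq_mul, norm_mul, mul_pow, Complex.norm_real,
    Real.norm_eq_abs, sq_abs, Real.sq_sqrt hp, scaledEntropy_const_mul hp]

lemma exists_isUnitVec_sqrt_smul_eq [Fintype α] [Nonempty α] (φ : α → ℂ) :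
    ∃ v, IsUnitVec v ∧ φ = (((√(∑ i, ‖φ i‖ ^ 2) : ℝ) : ℂ) • v) := by
  classical
  rcases (Finset.sum_nonneg fun i _ => sq_nonneg ‖φ i‖).eq_or_lt with hN | hN
  · have hφ : φ = 0 := funext fun i => by
      simpa using (Finset.sum_eq_zero_iff_of_nonneg fun i _ => sq_nonneg ‖φ i‖).mp hN.symm i
        (Finset.mem_univ i)
    refine ⟨Pi.single (Classical.arbitrary α) 1, ?_, by simp [hφ]⟩
    simp [IsUnitVec, Pi.single_apply, apply_ite]
  · refine ⟨(((√(∑ i, ‖φ i‖ ^ 2))⁻¹ : ℝ) : ℂ) • φ, ?_, ?_⟩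
    · simp only [IsUnitVec, Pi.smul_apply, smul_eq_mul, norm_mul, mul_pow, Complex.norm_real,
        Real.norm_eq_abs, sq_abs, inv_pow, ← Finset.mul_sum]
      rw [Real.sq_sqrt hN.le, inv_mul_cancel₀ hN.ne']
    · rw [smul_smul, ← Complex.ofReal_mul, mul_inv_cancel₀ (Real.sqrt_pos.mpr hN).ne',
        Complex.ofReal_one, one_smul]

lemma kroneckerMap_sum_pureState [Fintype γ] [Fintype δ] (φ : γ → α → ℂ) (χ : δ → β → ℂ) :
    kroneckerMap (· * ·) (∑ k, pureState (φ k)) (∑ l, pureState (χ l)) =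
      ∑ kl : γ × δ, pureState fun p : α × β => φ kl.1 p.1 * χ kl.2 p.2 := by
  ext a b
  simp only [kroneckerMap_apply, Matrix.sum_apply, pureState, of_apply, Finset.sum_mul_sum,
    Fintype.sum_prod_type, star_mul']
  exact Finset.sum_congr rfl fun k _ => Finset.sum_congr rfl fun l _ => by ring

lemma coherenceEntropy_mul [Fintype α] [Fintype β] (φ : α → ℂ) (χ : β → ℂ) :
    coherenceEntropy (fun p : α × β => φ p.1 * χ p.2) =
      (∑ j, ‖χ j‖ ^ 2) * coherenceEntropy φ + (∑ i, ‖φ i‖ ^ 2) * coherenceEntropy χ := by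
  simp only [coherenceEntropy, norm_mul, mul_pow]
  exact scaledEntropy_mul (f := fun i => ‖φ i‖ ^ 2) (g := fun j => ‖χ j‖ ^ 2)
    (fun _ => sq_nonneg _) (fun _ => sq_nonneg _)

lemma sum_coherenceEntropy_slices_le [Fintype α] [Fintype β] (ψ : α × β → ℂ) :
    ∑ b, coherenceEntropy (fun a => ψ (a, b)) + ∑ a, coherenceEntropy (fun b => ψ (a, b)) ≤
      coherenceEntropy ψ :=
  sum_scaledEntropy_slices_le (t := fun p : α × β => ‖ψ p‖ ^ 2) fun _ => sq_nonneg _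

end PureStates

section FormationValues

variable {α β γ : Type*} [Fintype α]

/-- The values `∑ₖ p_k S(Δ(ψ_k))` of `Cf`, written for the unnormalised vectors `φ_k = √p_k ψ_k`. -/
def formationValues (ρ : Matrix α α ℂ) : Set ℝ :=
  {x | ∃ (m : ℕ) (φ : Fin m → α → ℂ), ρ = ∑ k, pureState (φ k) ∧ x = ∑ k, coherenceEntropy (φ k)}

lemma sum_mem_formationValues [Fintype β] {ρ : Matrix α α ℂ} (φ : β → α → ℂ)
    (hρ : ρ = ∑ k, pureState (φ k)) : ∑ k, coherenceEntropy (φ k) ∈ formationValues ρ := by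
  let e := Fintype.equivFin β
  refine ⟨Fintype.card β, fun k => φ (e.symm k), ?_, ?_⟩ <;>
    simp only [hρ, e.symm.sum_comp (fun k => pureState (φ k)),
      e.symm.sum_comp (fun k => coherenceEntropy (φ k))]

lemma formationValues_bddBelow (ρ : Matrix α α ℂ) : BddBelow (formationValues ρ) := by
  refine ⟨0, ?_⟩
  rintro _ ⟨m, φ, -, rfl⟩
  exact Finset.sum_nonneg fun k _ => scaledEntropy_nonneg fun i => sq_nonneg _

open scoped MatrixOrder Matrix.Norms.L2Operator in
lemma formationValues_nonempty {ρ : Matrix α α ℂ} (hρ : ρ.PosSemidef) :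
    (formationValues ρ).Nonempty := by
  classical
  obtain ⟨B, rfl⟩ := CStarAlgebra.nonneg_iff_eq_star_mul_self.mp hρ.nonneg
  refine ⟨_, sum_mem_formationValues (fun k a => star (B k a)) ?_⟩
  ext a b
  simp [Matrix.mul_apply, pureState, Matrix.sum_apply]

lemma Cf_eq_sInf_formationValues [DecidableEq α] [Nonempty α] (ρ : Matrix α α ℂ) :
    Cf ρ = sInf (formationValues ρ) := by
  unfold Cf
  congr 1
  ext x
  constructor
  · rintro ⟨m, p, v, hp, hv, rfl, rfl⟩
    refine ⟨m, fun k => ((√(p k) : ℝ) : ℂ) • v k, ?_, ?_⟩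
    · simp only [pureState_sqrt_smul (hp _)]
    · simp only [coherenceEntropy_sqrt_smul (hp _), vN_dephase_pureState (hv _)]
  · rintro ⟨m, φ, rfl, rfl⟩
    choose v hv hφ using fun k => exists_isUnitVec_sqrt_smul_eq (φ k)
    refine ⟨m, fun k => ∑ i, ‖φ k i‖ ^ 2, v, fun k => Finset.sum_nonneg fun i _ => sq_nonneg _,
      hv, ?_, ?_⟩
    · conv_lhs => rw [funext hφ]
      simp only [pureState_sqrt_smul (Finset.sum_nonneg fun i _ => sq_nonneg _)]
    · conv_lhs => rw [funext hφ]
      simp only [coherenceEntropy_sqrt_smul (Finset.sum_nonneg fun i _ => sq_nonneg _),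
        vN_dephase_pureState (hv _)]

end FormationValues

section Kronecker

variable {α β γ : Type*}

lemma nonempty_of_trace_eq_one [Fintype α] {ρ : Matrix α α ℂ} (hρ : ρ.trace = 1) :
    Nonempty α := by
  by_contra hα
  rw [not_nonempty_iff] at hα
  simp [trace] at hρ

lemma sum_sum_norm_sq_eq_one [Fintype α] [Fintype γ] {φ : γ → α → ℂ}
    (h : (∑ k, pureState (φ k)).trace = 1) :
    ∑ k, ∑ i, ‖φ k i‖ ^ 2 = 1 := by
  simp only [trace_sum, trace_pureState, ← Complex.ofReal_sum] at h
  exact_mod_cast h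

lemma add_mem_formationValues_kroneckerMap [Fintype α] [Fintype β] {ρ : Matrix α α ℂ}
    {σ : Matrix β β ℂ} (hρ : ρ.trace = 1) (hσ : σ.trace = 1) {x y : ℝ}
    (hx : x ∈ formationValues ρ) (hy : y ∈ formationValues σ) :
    x + y ∈ formationValues (kroneckerMap (· * ·) ρ σ) := by
  obtain ⟨m, φ, rfl, rfl⟩ := hx
  obtain ⟨n, χ, rfl, rfl⟩ := hy
  convert sum_mem_formationValues _ (kroneckerMap_sum_pureState φ χ) using 1
  simp only [coherenceEntropy_mul, Fintype.sum_prod_type, Finset.sum_add_distrib,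
    ← Finset.sum_mul, ← Finset.mul_sum, sum_sum_norm_sq_eq_one hρ, sum_sum_norm_sq_eq_one hσ]
  ring

lemma eq_sum_pureState_slices [Fintype β] [Fintype γ] {ρ : Matrix α α ℂ} {σ : Matrix β β ℂ}
    {ψ : γ → α × β → ℂ} (hσ : σ.trace = 1)
    (h : kroneckerMap (· * ·) ρ σ = ∑ k, pureState (ψ k)) :
    ρ = ∑ kj : γ × β, pureState fun i => ψ kj.1 (i, kj.2) := by
  ext a b
  calc ρ a b = ∑ j, kroneckerMap (· * ·) ρ σ (a, j) (b, j) := by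
        simp only [kroneckerMap_apply, ← Finset.mul_sum, show ∑ j, σ j j = 1 from hσ, mul_one]
    _ = _ := by
        simp only [h, Matrix.sum_apply, Fintype.sum_prod_type]
        rw [Finset.sum_comm]
        rfl

lemma kroneckerMap_swap_eq_sum_pureState [Fintype γ] {ρ : Matrix α α ℂ} {σ : Matrix β β ℂ}
    {ψ : γ → α × β → ℂ} (h : kroneckerMap (· * ·) ρ σ = ∑ k, pureState (ψ k)) :
    kroneckerMap (· * ·) σ ρ = ∑ k, pureState fun p => ψ k p.swap := by
  ext a b
  have hab := congrFun (congrFun h a.swap) b.swap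
  simp only [kroneckerMap_apply, Matrix.sum_apply, Prod.fst_swap, Prod.snd_swap] at hab ⊢
  rw [mul_comm, hab]
  rfl

lemma exists_add_le_of_mem_formationValues_kroneckerMap [Fintype α] [Fintype β]
    {ρ : Matrix α α ℂ} {σ : Matrix β β ℂ} (hρ : ρ.trace = 1) (hσ : σ.trace = 1) {z : ℝ}
    (hz : z ∈ formationValues (kroneckerMap (· * ·) ρ σ)) :
    ∃ x ∈ formationValues ρ, ∃ y ∈ formationValues σ, x + y ≤ z := by
  obtain ⟨m, ψ, hψ, rfl⟩ := hz
  refine ⟨_, sum_mem_formationValues _ (eq_sum_pureState_slices hσ hψ),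
    _, sum_mem_formationValues _
      (eq_sum_pureState_slices hρ (kroneckerMap_swap_eq_sum_pureState hψ)), ?_⟩
  simp only [Fintype.sum_prod_type, ← Finset.sum_add_distrib]
  exact Finset.sum_le_sum fun k _ => sum_coherenceEntropy_slices_le (ψ k)

end Kronecker

/-- The coherence of formation is additive under tensor products. -/
theorem Cf_additive {d d' : ℕ} (ρ : Matrix (Fin d) (Fin d) ℂ)
    (σ : Matrix (Fin d') (Fin d') ℂ) (hρ : IsDensity ρ) (hσ : IsDensity σ) :
    Cf (Matrix.kroneckerMap (· * ·) ρ σ) = Cf ρ + Cf σ := by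
  have := nonempty_of_trace_eq_one hρ.2
  have := nonempty_of_trace_eq_one hσ.2
  have hρne := formationValues_nonempty hρ.1
  have hσne := formationValues_nonempty hσ.1
  rw [Cf_eq_sInf_formationValues, Cf_eq_sInf_formationValues, Cf_eq_sInf_formationValues]
  apply le_antisymm
  · rw [← csInf_add hρne (formationValues_bddBelow ρ) hσne (formationValues_bddBelow σ)]
    refine csInf_le_csInf (formationValues_bddBelow _) (hρne.add hσne) ?_
    rintro _ ⟨x, hx, y, hy, rfl⟩
    exact add_mem_formationValues_kroneckerMap hρ.2 hσ.2 hx hy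
  · obtain ⟨x, hx⟩ := hρne
    obtain ⟨y, hy⟩ := hσne
    refine le_csInf ⟨x + y, add_mem_formationValues_kroneckerMap hρ.2 hσ.2 hx hy⟩ fun z hz => ?_
    obtain ⟨x', hx', y', hy', hle⟩ := exists_add_le_of_mem_formationValues_kroneckerMap hρ.2 hσ.2 hz
    exact (add_le_add (csInf_le (formationValues_bddBelow ρ) hx')
      (csInf_le (formationValues_bddBelow σ) hy')).trans hle

end Coherence
end

section
/- The relative entropy of coherence is asymptotically continuous: for density matrices ρ and σ on ℂ^d with ‖ρ − σ‖₁ ≤ ε ≤ 1, one has |C_r(ρ) − C_r(σ)| ≤ ε log₂ d + 2h(ε/2), where h is the binary entropy function. -/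
namespace Real

variable {n : Type*} [Fintype n]

lemma negMulLog_add_le {x y : ℝ} (hx : 0 ≤ x) (hy : 0 ≤ y) :
    negMulLog (x + y) ≤ negMulLog x + negMulLog y := by
  have mul_log_le (u : ℝ) (hu : 0 ≤ u) (huv : u ≤ x + y) : u * log u ≤ u * log (x + y) := by
    rcases hu.eq_or_lt with rfl | hu
    · simp
    · exact mul_le_mul_of_nonneg_left (log_le_log hu huv) hu.le
  simp only [negMulLog, neg_mul]
  linarith [mul_log_le x hx (by linarith), mul_log_le y hy (by linarith)]

lemma negMulLog_sum_le_sum_negMulLog {f : n → ℝ} (hf : ∀ i, 0 ≤ f i) :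
    negMulLog (∑ i, f i) ≤ ∑ i, negMulLog (f i) :=
  Finset.le_sum_of_subadditive_on_pred _ (0 ≤ ·) (by simp)
    (fun _ _ => negMulLog_add_le) (fun _ _ => add_nonneg) f fun i _ => hf i

lemma sum_negMulLog_le_negMulLog_sum_add_mul_log_card {f : n → ℝ} (hf : ∀ i, 0 ≤ f i) :
    ∑ i, negMulLog (f i) ≤ negMulLog (∑ i, f i) + (∑ i, f i) * log (Fintype.card n) := by
  rcases isEmpty_or_nonempty n with hn | hn
  · simp
  set c : ℝ := (Fintype.card n : ℝ)
  have hc : 0 < c := by simp [c, Fintype.card_pos]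
  have jensen : ∑ i, c⁻¹ • negMulLog (f i) ≤ negMulLog (∑ i, c⁻¹ • f i) :=
    concaveOn_negMulLog.le_map_sum (fun _ _ => by positivity)
      (by simp [Finset.card_univ, c, hc.ne']) fun i _ => hf i
  rw [← Finset.smul_sum, ← Finset.smul_sum, smul_eq_mul, smul_eq_mul, negMulLog_mul] at jensen
  calc ∑ i, negMulLog (f i) = c * (c⁻¹ * ∑ i, negMulLog (f i)) := by field_simp
    _ ≤ c * ((∑ i, f i) * negMulLog c⁻¹ + c⁻¹ * negMulLog (∑ i, f i)) := by gcongr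
    _ = negMulLog (∑ i, f i) + (∑ i, f i) * log c := by
      simp only [negMulLog, log_inv]
      field_simp
      ring

/-- Concavity of `negMulLog` at the points `x / X` and `y / Y` with weights `X` and `Y`. -/
lemma le_negMulLog_add {x y X Y : ℝ} (hx : 0 ≤ x) (hy : 0 ≤ y) (hxX : x ≤ X) (hyY : y ≤ Y)
    (hXY : X + Y = 1) :
    negMulLog x + x * log X + (negMulLog y + y * log Y) ≤ negMulLog (x + y) := by
  have rescale (u U : ℝ) (hu : 0 ≤ u) (huU : u ≤ U) :
      U * negMulLog (u / U) = negMulLog u + u * log U ∧ U * (u / U) = u := by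
    rcases (hu.trans huU).eq_or_lt with rfl | hU
    · simp [le_antisymm huU hu]
    · refine ⟨?_, mul_div_cancel₀ u hU.ne'⟩
      rw [div_eq_mul_inv, negMulLog_mul]
      simp only [negMulLog, log_inv]
      field_simp
  obtain ⟨hX, hxX'⟩ := rescale x X hx hxX
  obtain ⟨hY, hyY'⟩ := rescale y Y hy hyY
  have := concaveOn_negMulLog.2 (x := x / X) (y := y / Y)
    (div_nonneg hx (hx.trans hxX)) (div_nonneg hy (hy.trans hyY))
    (hx.trans hxX) (hy.trans hyY) hXY
  simpa only [smul_eq_mul, hxX', hyY', hX, hY] using this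

lemma sum_negMulLog_add_sum_negMulLog_sub_binEntropy_le {f g : n → ℝ} (hf : ∀ i, 0 ≤ f i)
    (hg : ∀ i, 0 ≤ g i) (hfg : ∑ i, f i + ∑ i, g i = 1) :
    ∑ i, negMulLog (f i) + ∑ i, negMulLog (g i) - binEntropy (∑ i, g i) ≤
      ∑ i, negMulLog (f i + g i) := by
  have single_le (h : n → ℝ) (hh : ∀ i, 0 ≤ h i) (i : n) : h i ≤ ∑ j, h j :=
    Finset.single_le_sum (fun j _ => hh j) (Finset.mem_univ i)
  have pointwise := Finset.sum_le_sum fun i (_ : i ∈ Finset.univ) =>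
    le_negMulLog_add (hf i) (hg i) (single_le f hf i) (single_le g hg i) hfg
  simp only [Finset.sum_add_distrib, ← Finset.sum_mul] at pointwise
  rw [binEntropy_eq_negMulLog_add_negMulLog_one_sub, ← eq_sub_of_add_eq hfg]
  simp only [negMulLog] at pointwise ⊢
  linarith

theorem sum_negMulLog_sub_sum_negMulLog_le {p q : n → ℝ} (hp : ∀ i, 0 ≤ p i)
    (hq : ∀ i, 0 ≤ q i) (hp1 : ∑ i, p i = 1) (hq1 : ∑ i, q i = 1) :
    ∑ i, negMulLog (p i) - ∑ i, negMulLog (q i) ≤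
      (∑ i, |p i - q i|) / 2 * log (Fintype.card n) + binEntropy ((∑ i, |p i - q i|) / 2) := by
  set T := (∑ i, |p i - q i|) / 2
  set m : n → ℝ := fun i => min (p i) (q i)
  set a : n → ℝ := fun i => p i - m i
  set b : n → ℝ := fun i => q i - m i
  have hm : ∀ i, 0 ≤ m i := fun i => le_min (hp i) (hq i)
  have ha : ∀ i, 0 ≤ a i := fun i => sub_nonneg.2 (min_le_left _ _)
  have hb : ∀ i, 0 ≤ b i := fun i => sub_nonneg.2 (min_le_right _ _)
  have hab : ∀ i, a i + b i = |p i - q i| := fun i => by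
    rw [← max_sub_min_eq_abs, max_comm, min_comm]
    simp only [a, b, m]
    linarith [min_add_max (p i) (q i)]
  have hsab : ∑ i, a i = ∑ i, b i := by simp only [a, b, Finset.sum_sub_distrib, hp1, hq1]
  have hsa : ∑ i, a i = T := by
    have : ∑ i, a i + ∑ i, b i = 2 * T := by
      rw [← Finset.sum_add_distrib, Finset.sum_congr rfl fun i _ => hab i]
      ring
    linarith
  have hsb : ∑ i, b i = T := hsab ▸ hsa
  have hsm : ∑ i, m i + ∑ i, b i = 1 := by
    rw [← Finset.sum_add_distrib, ← hq1]
    exact Finset.sum_congr rfl fun i _ => by simp [b]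
  have hp_split : ∑ i, negMulLog (p i) ≤ ∑ i, negMulLog (m i) + ∑ i, negMulLog (a i) := by
    rw [← Finset.sum_add_distrib]
    exact Finset.sum_le_sum fun i _ => by
      simpa [a] using negMulLog_add_le (hm i) (ha i)
  have hq_split := sum_negMulLog_add_sum_negMulLog_sub_binEntropy_le hm hb hsm
  simp only [m, b, add_sub_cancel] at hq_split
  have ha_max := sum_negMulLog_le_negMulLog_sum_add_mul_log_card ha
  have hb_min := negMulLog_sum_le_sum_negMulLog hb
  rw [hsa] at ha_max
  rw [hsb] at hb_min hq_split
  linarith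

end Real

section

open Matrix

variable {n : Type*} [Fintype n] [DecidableEq n]

lemma ConvexOn.sum_map_mulVec_le {S : Matrix n n ℝ} (hS : S ∈ doublyStochastic ℝ n)
    {s : Set ℝ} {φ : ℝ → ℝ} (hφ : ConvexOn ℝ s φ) {x : n → ℝ} (hx : ∀ j, x j ∈ s) :
    ∑ i, φ ((S *ᵥ x) i) ≤ ∑ i, φ (x i) :=
  calc ∑ i, φ ((S *ᵥ x) i) ≤ ∑ i, ∑ j, S i j * φ (x j) :=
        Finset.sum_le_sum fun i _ => hφ.map_sum_le (fun j _ => nonneg_of_mem_doublyStochastic hS)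
          (sum_row_of_mem_doublyStochastic hS i) fun j _ => hx j
    _ = ∑ j, φ (x j) := by
        rw [Finset.sum_comm]
        simp only [← Finset.sum_mul, sum_col_of_mem_doublyStochastic hS, one_mul]

lemma ConcaveOn.sum_le_sum_map_mulVec {S : Matrix n n ℝ} (hS : S ∈ doublyStochastic ℝ n)
    {s : Set ℝ} {φ : ℝ → ℝ} (hφ : ConcaveOn ℝ s φ) {x : n → ℝ} (hx : ∀ j, x j ∈ s) :
    ∑ i, φ (x i) ≤ ∑ i, φ ((S *ᵥ x) i) := by
  simpa [Finset.sum_neg_distrib] using ConvexOn.sum_map_mulVec_le hS hφ.neg hx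

lemma Matrix.mul_diagonal_mul_star_apply_self (U : Matrix n n ℂ) (v : n → ℝ) (i : n) :
    (U * diagonal (fun j => (v j : ℂ)) * star U) i i =
      ((U.map fun z => ‖z‖ ^ 2) *ᵥ v) i := by
  rw [mul_apply]
  simp only [mul_diagonal, star_apply, mulVec, dotProduct, map_apply]
  push_cast
  refine Finset.sum_congr rfl fun j _ => ?_
  rw [← Complex.mul_conj', Complex.star_def]
  ring

lemma Matrix.map_normSq_mem_doublyStochastic {U : Matrix n n ℂ} (hU : U ∈ unitaryGroup n ℂ) :
    (U.map fun z => ‖z‖ ^ 2) ∈ doublyStochastic ℝ n := by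
  have sum_one {V : Matrix n n ℂ} (hV : V * star V = 1) (i : n) : ∑ j, ‖V i j‖ ^ 2 = 1 := by
    have := congrFun (congrFun hV i) i
    simp only [mul_apply, star_apply, one_apply_eq, Complex.star_def,
      Complex.mul_conj'] at this
    exact_mod_cast this
  refine mem_doublyStochastic_iff_sum.2 ⟨fun i j => by simp only [map_apply]; positivity, sum_one
    (mem_unitaryGroup_iff.1 hU), fun j => ?_⟩
  simpa using sum_one (mem_unitaryGroup_iff.1 (Unitary.star_mem hU)) j

lemma Matrix.IsHermitian.eq_mul_diagonal_mul_star {A : Matrix n n ℂ} (hA : A.IsHermitian) :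
    A = (hA.eigenvectorUnitary : Matrix n n ℂ) * diagonal (fun j => (hA.eigenvalues j : ℂ)) *
      star (hA.eigenvectorUnitary : Matrix n n ℂ) := by
  conv_lhs => rw [hA.spectral_theorem, Unitary.conjStarAlgAut_apply]
  rfl

lemma Matrix.IsHermitian.star_mul_mul_eq_diagonal {A : Matrix n n ℂ} (hA : A.IsHermitian) :
    star (hA.eigenvectorUnitary : Matrix n n ℂ) * A * (hA.eigenvectorUnitary : Matrix n n ℂ) =
      diagonal (fun j => (hA.eigenvalues j : ℂ)) := by
  have := hA.conjStarAlgAut_star_eigenvectorUnitary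
  rw [Unitary.conjStarAlgAut_star_apply] at this
  exact this

lemma Matrix.IsHermitian.exists_doublyStochastic_re_diag {B : Matrix n n ℂ} (hB : B.IsHermitian)
    {U : Matrix n n ℂ} (hU : U ∈ unitaryGroup n ℂ) :
    ∃ S ∈ doublyStochastic ℝ n, ∀ i, ((star U * B * U) i i).re = (S *ᵥ hB.eigenvalues) i := by
  set V := (hB.eigenvectorUnitary : Matrix n n ℂ)
  refine ⟨(star U * V).map fun z => ‖z‖ ^ 2, map_normSq_mem_doublyStochastic
    (Submonoid.mul_mem _ (Unitary.star_mem hU) hB.eigenvectorUnitary.2), fun i => ?_⟩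
  have hconj : star U * B * U =
      (star U * V) * diagonal (fun j => (hB.eigenvalues j : ℂ)) * star (star U * V) := by
    rw [star_mul, star_star]
    conv_lhs => rw [hB.eq_mul_diagonal_mul_star]
    simp only [V, Matrix.mul_assoc]
  rw [hconj, mul_diagonal_mul_star_apply_self, Complex.ofReal_re]

end

namespace Coherence

open Matrix Real
open scoped ComplexOrder MatrixOrder

lemma IsDensity.re_diag_nonneg {n : Type*} [Fintype n] {ρ : Matrix n n ℂ} (hρ : IsDensity ρ)
    (i : n) : 0 ≤ (ρ i i).re :=
  (Complex.le_def.1 hρ.1.diag_nonneg).1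

lemma IsDensity.sum_re_diag {n : Type*} [Fintype n] {ρ : Matrix n n ℂ} (hρ : IsDensity ρ) :
    ∑ i, (ρ i i).re = 1 := by
  simpa [trace, Complex.re_sum] using congrArg Complex.re hρ.2

variable {n : Type*} [Fintype n] [DecidableEq n]

lemma matSqrt_eq_cfcSqrt {B : Matrix n n ℂ} (hB : B.PosSemidef) : matSqrt B = CFC.sqrt B := by
  unfold matSqrt matFun
  rw [dif_pos hB.1, CFC.sqrt_eq_real_sqrt B hB.nonneg, cfcₙ_eq_cfc, hB.1.cfc_eq, IsHermitian.cfc,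
    Unitary.conjStarAlgAut_apply]
  rfl

lemma traceNorm_mul_diagonal_mul_star {U : Matrix n n ℂ} (hU : U ∈ unitaryGroup n ℂ)
    (v : n → ℝ) :
    traceNorm (U * diagonal (fun j => (v j : ℂ)) * star U) = ∑ j, |v j| := by
  set A := U * diagonal (fun j => (v j : ℂ)) * star U
  set N := U * diagonal (fun j => ((|v j| : ℝ) : ℂ)) * star U
  have hUU : star U * U = 1 := mem_unitaryGroup_iff'.1 hU
  have hN : N.PosSemidef := by
    simp only [N, star_eq_conjTranspose]
    exact PosSemidef.mul_mul_conjTranspose_same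
      (posSemidef_diagonal_iff.2 fun j => by exact_mod_cast abs_nonneg (v j)) U
  have conj_mul (D E : Matrix n n ℂ) :
      U * D * star U * (U * E * star U) = U * (D * E) * star U := by
    simp only [Matrix.mul_assoc, ← Matrix.mul_assoc (star U) U, hUU, Matrix.one_mul]
  have hNN : N * N = Aᴴ * A := by
    have hA : Aᴴ = A := by
      simp only [A, ← star_eq_conjTranspose, star_mul, star_star, Matrix.mul_assoc]
      simp [star_eq_conjTranspose, diagonal_conjTranspose, Pi.star_def]
    simp only [hA, N, A, conj_mul, diagonal_mul_diagonal, ← Complex.ofReal_mul, abs_mul_abs_self]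
  unfold traceNorm
  rw [matSqrt_eq_cfcSqrt (posSemidef_conjTranspose_mul_self A), CFC.sqrt_unique hNN hN.nonneg,
    trace_mul_cycle, hUU, Matrix.one_mul, trace_diagonal, Complex.re_sum]
  simp

lemma traceNorm_eq_sum_abs_eigenvalues {B : Matrix n n ℂ} (hB : B.IsHermitian) :
    traceNorm B = ∑ j, |hB.eigenvalues j| := by
  conv_lhs => rw [hB.eq_mul_diagonal_mul_star]
  exact traceNorm_mul_diagonal_mul_star hB.eigenvectorUnitary.2 _

lemma traceNorm_diagonal (v : n → ℝ) :
    traceNorm (diagonal fun j => (v j : ℂ)) = ∑ j, |v j| := by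
  simpa using traceNorm_mul_diagonal_mul_star (Submonoid.one_mem _) v

lemma traceNorm_sub_comm (A B : Matrix n n ℂ) : traceNorm (A - B) = traceNorm (B - A) := by
  unfold traceNorm
  rw [← neg_sub, conjTranspose_neg, neg_mul_neg]

lemma sum_abs_re_diag_le_traceNorm {B : Matrix n n ℂ} (hB : B.IsHermitian)
    {U : Matrix n n ℂ} (hU : U ∈ unitaryGroup n ℂ) :
    ∑ i, |((star U * B * U) i i).re| ≤ traceNorm B := by
  obtain ⟨S, hS, hdiag⟩ := hB.exists_doublyStochastic_re_diag hU
  simp only [hdiag, traceNorm_eq_sum_abs_eigenvalues hB]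
  simpa only [Real.norm_eq_abs] using
    ConvexOn.sum_map_mulVec_le hS convexOn_univ_norm (x := hB.eigenvalues) fun _ => trivial

lemma vN_eq_sum_negMulLog {A : Matrix n n ℂ} (hA : A.IsHermitian) :
    vN A = (∑ i, negMulLog (hA.eigenvalues i)) / log 2 := by
  simp only [vN, dif_pos hA, Finset.sum_div, ← Finset.sum_neg_distrib, negMulLog, logb]
  exact Finset.sum_congr rfl fun _ _ => by ring

lemma vN_le_sum_negMulLog_re_diag {A : Matrix n n ℂ} (hA : A.PosSemidef)
    {U : Matrix n n ℂ} (hU : U ∈ unitaryGroup n ℂ) :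
    vN A ≤ (∑ i, negMulLog ((star U * A * U) i i).re) / log 2 := by
  obtain ⟨S, hS, hdiag⟩ := hA.1.exists_doublyStochastic_re_diag hU
  rw [vN_eq_sum_negMulLog hA.1]
  simp only [hdiag]
  gcongr ?_ / _
  exact ConcaveOn.sum_le_sum_map_mulVec hS concaveOn_negMulLog fun i => hA.eigenvalues_nonneg i

lemma IsDensity.sum_eigenvalues {ρ : Matrix n n ℂ} (hρ : IsDensity ρ) :
    ∑ i, hρ.1.1.eigenvalues i = 1 := by
  have := congrArg Complex.re (hρ.1.1.trace_eq_sum_eigenvalues.symm.trans hρ.2)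
  simpa [Complex.re_sum] using this

lemma IsDensity.star_mul_mul {ρ : Matrix n n ℂ} (hρ : IsDensity ρ) {U : Matrix n n ℂ}
    (hU : U ∈ unitaryGroup n ℂ) : IsDensity (star U * ρ * U) := by
  refine ⟨?_, ?_⟩
  · simpa only [star_eq_conjTranspose] using hρ.1.conjTranspose_mul_mul_same U
  · rw [trace_mul_cycle, mem_unitaryGroup_iff.1 hU, Matrix.one_mul, hρ.2]

lemma sum_abs_re_diag_sub_eigenvalues_le_traceNorm {ρ σ : Matrix n n ℂ} (hρ : ρ.IsHermitian)
    (hσ : σ.IsHermitian) :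
    ∑ i, |((star (hρ.eigenvectorUnitary : Matrix n n ℂ) * σ * hρ.eigenvectorUnitary) i i).re -
      hρ.eigenvalues i| ≤ traceNorm (ρ - σ) := by
  set W := (hρ.eigenvectorUnitary : Matrix n n ℂ)
  have hdiff (i : n) :
      |((star W * (ρ - σ) * W) i i).re| = |((star W * σ * W) i i).re - hρ.eigenvalues i| := by
    rw [Matrix.mul_sub, Matrix.sub_mul, Matrix.sub_apply, hρ.star_mul_mul_eq_diagonal,
      Complex.sub_re, diagonal_apply_eq, Complex.ofReal_re, abs_sub_comm]
  simpa only [hdiff] using sum_abs_re_diag_le_traceNorm (hρ.sub hσ) (U := W) hρ.eigenvectorUnitary.2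

lemma binEnt_eq_binEntropy_div (x : ℝ) : binEnt x = binEntropy x / log 2 := by
  simp only [binEnt, binEntropy, logb, log_inv]
  ring

theorem vN_sub_vN_le {ρ σ : Matrix n n ℂ} (hρ : IsDensity ρ) (hσ : IsDensity σ) {s : ℝ}
    (hclose : traceNorm (ρ - σ) ≤ 2 * s) (hs : s ≤ 1 / 2) :
    vN σ - vN ρ ≤ s * logb 2 (Fintype.card n) + binEnt s := by
  set W := (hρ.1.1.eigenvectorUnitary : Matrix n n ℂ)
  have hW : W ∈ unitaryGroup n ℂ := hρ.1.1.eigenvectorUnitary.2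
  have hσW := hσ.star_mul_mul hW
  set p := hρ.1.1.eigenvalues
  set q : n → ℝ := fun i => ((star W * σ * W) i i).re
  have hpq : ∑ i, |q i - p i| ≤ 2 * s :=
    (sum_abs_re_diag_sub_eigenvalues_le_traceNorm hρ.1.1 hσ.1.1).trans hclose
  have fannes := sum_negMulLog_sub_sum_negMulLog_le hσW.re_diag_nonneg hρ.1.eigenvalues_nonneg
    hσW.sum_re_diag hρ.sum_eigenvalues
  set T := (∑ i, |q i - p i|) / 2 with hT_def
  have hT : 0 ≤ T := by positivity
  have hTs : T ≤ s := by linarith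
  set c : ℝ := (Fintype.card n : ℝ)
  have hc : 0 ≤ log c := by
    have : Nonempty n := by
      by_contra h
      simpa [not_nonempty_iff.1 h] using hρ.sum_eigenvalues
    exact log_nonneg (Nat.one_le_cast.2 Fintype.card_pos)
  have mono : T * log c + binEntropy T ≤ s * log c + binEntropy s := by
    have := binEntropy_strictMonoOn.monotoneOn ⟨hT, by linarith⟩ ⟨hT.trans hTs, by linarith⟩ hTs
    nlinarith [mul_le_mul_of_nonneg_right hTs hc]
  calc vN σ - vN ρ ≤ (∑ i, negMulLog (q i) - ∑ i, negMulLog (p i)) / log 2 := by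
        rw [vN_eq_sum_negMulLog hρ.1.1, sub_div]
        exact sub_le_sub_right (vN_le_sum_negMulLog_re_diag hσ.1 hW) _
    _ ≤ (s * log c + binEntropy s) / log 2 := by gcongr; linarith
    _ = s * logb 2 c + binEnt s := by rw [binEnt_eq_binEntropy_div, logb]; ring

theorem abs_vN_sub_vN_le {ρ σ : Matrix n n ℂ} (hρ : IsDensity ρ) (hσ : IsDensity σ) {s : ℝ}
    (hclose : traceNorm (ρ - σ) ≤ 2 * s) (hs : s ≤ 1 / 2) :
    |vN ρ - vN σ| ≤ s * logb 2 (Fintype.card n) + binEnt s :=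
  abs_sub_le_iff.2 ⟨vN_sub_vN_le hσ hρ (traceNorm_sub_comm ρ σ ▸ hclose) hs,
    vN_sub_vN_le hρ hσ hclose hs⟩

lemma isDensity_dephase {ρ : Matrix n n ℂ} (hρ : IsDensity ρ) : IsDensity (dephase ρ) :=
  ⟨posSemidef_diagonal_iff.2 fun _ => hρ.1.diag_nonneg, by simpa [dephase, trace] using hρ.2⟩

lemma traceNorm_dephase_sub_dephase_le {ρ σ : Matrix n n ℂ} (hρ : ρ.IsHermitian)
    (hσ : σ.IsHermitian) : traceNorm (dephase ρ - dephase σ) ≤ traceNorm (ρ - σ) := by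
  have hdiag : dephase ρ - dephase σ = diagonal fun i => (((ρ - σ) i i).re : ℂ) := by
    rw [dephase, dephase, diagonal_sub]
    congr 1
    funext i
    rw [Complex.conj_eq_iff_re.1 ((hρ.sub hσ).apply i i), Matrix.sub_apply]
  rw [hdiag, traceNorm_diagonal]
  simpa using sum_abs_re_diag_le_traceNorm (hρ.sub hσ) (Submonoid.one_mem _)

/-- Asymptotic continuity of the relative entropy of coherence. -/
theorem Cr_asymptotically_continuous {d : ℕ} (ρ σ : Matrix (Fin d) (Fin d) ℂ)
    (hρ : IsDensity ρ) (hσ : IsDensity σ)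
    (ε : ℝ) (hε1 : ε ≤ 1) (hclose : traceNorm (ρ - σ) ≤ ε) :
    |Cr ρ - Cr σ| ≤ ε * Real.logb 2 d + 2 * binEnt (ε / 2) := by
  have hs : ε / 2 ≤ 1 / 2 := by linarith
  have hclose' : traceNorm (ρ - σ) ≤ 2 * (ε / 2) := by linarith
  have hvN := abs_vN_sub_vN_le hρ hσ hclose' hs
  have hvN_dephase := abs_vN_sub_vN_le (isDensity_dephase hρ) (isDensity_dephase hσ)
    ((traceNorm_dephase_sub_dephase_le hρ.1.1 hσ.1.1).trans hclose') hs
  rw [Fintype.card_fin] at hvN hvN_dephase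
  calc |Cr ρ - Cr σ| = |(vN (dephase ρ) - vN (dephase σ)) - (vN ρ - vN σ)| := by
        rw [Cr, Cr]; ring_nf
    _ ≤ |vN (dephase ρ) - vN (dephase σ)| + |vN ρ - vN σ| := abs_sub _ _
    _ ≤ ε * Real.logb 2 d + 2 * binEnt (ε / 2) := by linarith

end Coherence
end
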